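/- For all integers n ≥ 2, the Pell numbers satisfy P_{2n+2} = 2 · Σ_{j=0}^{⌊n/2⌋} C(n−j, j) · (−1)^j · 6^{n−2j}, where C(m,k) denotes the binomial coefficient. -/

import Mathlib

/-!
Both sides satisfy the recurrence `Q (m + 2) = 6 * Q (m + 1) - Q m` with `Q 0 = 2`, `Q 1 = 12`.
For the Pell side this is the bisection of `P (n + 2) = 2 * P (n + 1) + P n`. For the sum,
the weighted shallow diagonals `∑ C(i, j) y^j x^(i - j)` (over `i + j = n`) of Pascal's triangle
satisfy `s (n + 2) = x * s (n + 1) + y * s n` by Pascal's rule, and `x = 6`, `y = -1` here.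
-/

open Finset

section ShallowDiagonal

variable {R : Type*} [CommRing R] (x y : R)

-- Terms with `p.1 > p.2` vanish with the binomial coefficient, so the truncated exponent is harmless.
def shallowDiagonalSum (n : ℕ) : R :=
  ∑ p ∈ antidiagonal n, (p.2.choose p.1 : R) * y ^ p.1 * x ^ (p.2 - p.1)

@[simp]
lemma shallowDiagonalSum_zero : shallowDiagonalSum x y 0 = 1 := by
  simp [shallowDiagonalSum]

@[simp]
lemma shallowDiagonalSum_one : shallowDiagonalSum x y 1 = x := by
  simp [shallowDiagonalSum, Nat.antidiagonal_succ]

lemma shallowDiagonalSum_succ (n : ℕ) :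
    shallowDiagonalSum x y (n + 1) = x ^ (n + 1) +
      ∑ p ∈ antidiagonal n, (p.2.choose (p.1 + 1) : R) * y ^ (p.1 + 1) * x ^ (p.2 - (p.1 + 1)) := by
  simp [shallowDiagonalSum, Nat.sum_antidiagonal_succ]

lemma choose_succ_mul_pow_sub_succ (i j : ℕ) :
    (i.choose (j + 1) : R) * x ^ (i - (j + 1)) * x = (i.choose (j + 1) : R) * x ^ (i - j) := by
  rcases lt_or_ge j i with h | h
  · rw [mul_assoc, ← pow_succ, show i - (j + 1) + 1 = i - j by omega]
  · simp [Nat.choose_eq_zero_of_lt (Nat.lt_succ_of_le h)]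

lemma shallowDiagonalSum_add_two (n : ℕ) :
    shallowDiagonalSum x y (n + 2) =
      x * shallowDiagonalSum x y (n + 1) + y * shallowDiagonalSum x y n := by
  have hx : x * ∑ p ∈ antidiagonal n,
        (p.2.choose (p.1 + 1) : R) * y ^ (p.1 + 1) * x ^ (p.2 - (p.1 + 1)) =
      ∑ p ∈ antidiagonal n, (p.2.choose (p.1 + 1) : R) * y ^ (p.1 + 1) * x ^ (p.2 - p.1) := by
    rw [mul_sum]
    refine sum_congr rfl fun p _ => ?_
    linear_combination y ^ (p.1 + 1) * choose_succ_mul_pow_sub_succ x p.2 p.1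
  have hy : y * shallowDiagonalSum x y n =
      ∑ p ∈ antidiagonal n, (p.2.choose p.1 : R) * y ^ (p.1 + 1) * x ^ (p.2 - p.1) := by
    rw [shallowDiagonalSum, mul_sum]
    exact sum_congr rfl fun _ _ => by ring
  rw [shallowDiagonalSum_succ, Nat.sum_antidiagonal_succ', shallowDiagonalSum_succ, mul_add, hx, hy]
  simp only [Nat.choose_succ_succ', Nat.cast_add, Nat.add_sub_add_right, add_mul, sum_add_distrib,
    Nat.choose_zero_succ, Nat.cast_zero, zero_mul, zero_add]
  ring

lemma shallowDiagonalSum_eq_sum_range (n : ℕ) :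
    shallowDiagonalSum x y n =
      ∑ j ∈ range (n / 2 + 1), ((n - j).choose j : R) * y ^ j * x ^ (n - 2 * j) := by
  calc shallowDiagonalSum x y n
      = ∑ j ∈ range (n + 1), ((n - j).choose j : R) * y ^ j * x ^ (n - 2 * j) := by
        rw [shallowDiagonalSum, Nat.sum_antidiagonal_eq_sum_range_succ
          (fun j i => (i.choose j : R) * y ^ j * x ^ (i - j)) n]
        simp only [Nat.sub_sub, two_mul]
    _ = _ := by
        refine (sum_subset (range_subset_range.mpr (by omega)) fun j hj hj' => ?_).symm
        rw [mem_range] at hj'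
        rw [Nat.choose_eq_zero_of_lt (by omega), Nat.cast_zero, zero_mul, zero_mul]

end ShallowDiagonal

lemma add_four_of_add_two {R : Type*} [CommRing R] {a : ℕ → R} {c d : R}
    (ha : ∀ n, a (n + 2) = c * a (n + 1) + d * a n) (n : ℕ) :
    a (n + 4) = (c ^ 2 + 2 * d) * a (n + 2) - d ^ 2 * a n := by
  linear_combination ha (n + 2) + c * ha (n + 1) - d * ha n

theorem pell_binomial_even_general (P : ℕ → ℤ)
    (hP0 : P 0 = 0) (hP1 : P 1 = 1)
    (hP : ∀ n : ℕ, P (n + 2) = 2 * P (n + 1) + P n)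
    (n : ℕ) :
    P (2 * n + 2) = 2 * ∑ j ∈ Finset.range (n / 2 + 1),
      ((n - j).choose j : ℤ) * (-1 : ℤ) ^ j * 6 ^ (n - 2 * j) := by
  have hP' : ∀ n, P (n + 2) = 2 * P (n + 1) + 1 * P n := fun n => by rw [hP, one_mul]
  have hEven : ∀ m, P (2 * m + 2) = 2 * shallowDiagonalSum 6 (-1) m := by
    intro m
    induction m using Nat.twoStepInduction with
    | zero => simp [hP, hP0, hP1]
    | one => simp [hP, hP0, hP1]
    | more m ih ih' =>
      rw [shallowDiagonalSum_add_two]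
      linear_combination add_four_of_add_two hP' (2 * m + 2) + 6 * ih' - ih
  rw [hEven, shallowDiagonalSum_eq_sum_range]

/-- Pell: P_{2n+2} = 2 · Σ_{j=0}^{⌊n/2⌋} C(n−j, j) · (−1)^j · 6^{n−2j}. -/
theorem pell_binomial_even (P : ℕ → ℤ)
    (hP0 : P 0 = 0) (hP1 : P 1 = 1)
    (hP : ∀ n : ℕ, P (n + 2) = 2 * P (n + 1) + P n)
    (n : ℕ) (hn : 2 ≤ n) :
    P (2 * n + 2) = 2 * ∑ j ∈ Finset.range (n / 2 + 1),
      ((n - j).choose j : ℤ) * (-1 : ℤ) ^ j * 6 ^ (n - 2 * j) :=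
  pell_binomial_even_general P hP0 hP1 hP n
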